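/- If f : Rⁿ → R is convex, differentiable, and has L-Lipschitz continuous gradient, then its Fenchel conjugate f* is (1/L)-strongly convex. -/

import Mathlib

lemma descent {n : ℕ} (f : EuclideanSpace ℝ (Fin n) → ℝ) (L : ℝ) (hL : 0 < L)
    (g : EuclideanSpace ℝ (Fin n) → EuclideanSpace ℝ (Fin n))
    (hgrad : ∀ x, HasGradientAt f (g x) x)
    (hlip : LipschitzWith (Real.toNNReal L) g) (x y : EuclideanSpace ℝ (Fin n)) :
    f y ≤ f x + (inner ℝ (g x) (y - x) : ℝ) + L / 2 * ‖y - x‖ ^ 2 := by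
  set v := y - x with hv
  set A : ℝ := inner ℝ (g x) v with hA
  set B : ℝ := L / 2 * ‖v‖ ^ 2 with hB
  set φ : ℝ → ℝ := fun t => f (x + t • v) - t * A - t ^ 2 * B with hφdef
  have hc : ∀ t : ℝ, HasDerivAt (fun t : ℝ => x + t • v) v t := by
    intro t
    simpa using ((hasDerivAt_id t).smul_const v).const_add x
  have hφ : ∀ t : ℝ, HasDerivAt φ ((inner ℝ (g (x + t • v)) v : ℝ) - A - 2 * t * B) t := by
    intro t
    have h1 : HasDerivAt (fun t : ℝ => f (x + t • v)) (inner ℝ (g (x + t • v)) v : ℝ) t := by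
      have := ((hgrad (x + t • v)).hasFDerivAt.comp_hasDerivAt t (hc t))
      exact this
    have h2 : HasDerivAt (fun t : ℝ => t * A) A t := hasDerivAt_mul_const A
    have h3 : HasDerivAt (fun t : ℝ => t ^ 2 * B) (2 * t * B) t := by
      simpa [mul_comm] using (hasDerivAt_pow 2 t).mul_const B
    exact (h1.sub h2).sub h3
  have hanti : AntitoneOn φ (Set.Icc (0:ℝ) 1) := by
    apply antitoneOn_of_deriv_nonpos (convex_Icc 0 1)
    · exact fun t _ => ((hφ t).differentiableAt).continuousAt.continuousWithinAt
    · exact fun t _ => ((hφ t).differentiableAt).differentiableWithinAt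
    · intro t ht
      rw [interior_Icc] at ht
      rw [(hφ t).deriv]
      have hcs : (inner ℝ (g (x + t • v) - g x) v : ℝ) ≤ ‖g (x + t • v) - g x‖ * ‖v‖ :=
        real_inner_le_norm _ _
      have hlipb : ‖g (x + t • v) - g x‖ ≤ L * (t * ‖v‖) := by
        have := hlip.dist_le_mul (x + t • v) x
        rw [dist_eq_norm, dist_eq_norm] at this
        simp only [add_sub_cancel_left] at this
        calc ‖g (x + t • v) - g x‖ ≤ L.toNNReal * ‖t • v‖ := this
          _ = L * (t * ‖v‖) := by
              rw [norm_smul, Real.coe_toNNReal _ hL.le, Real.norm_eq_abs,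
                abs_of_pos ht.1]
      have hinner : (inner ℝ (g (x + t • v)) v : ℝ) - A = inner ℝ (g (x + t • v) - g x) v := by
        rw [inner_sub_left, hA]
      have hvn : (0:ℝ) ≤ ‖v‖ := norm_nonneg v
      nlinarith [mul_le_mul_of_nonneg_right hlipb hvn, hinner, hcs, hB, ht.1.le]
  have h01 : φ 1 ≤ φ 0 := hanti (by norm_num) (by norm_num) (by norm_num)
  have e1 : φ 1 = f y - A - B := by simp [hφdef, hv]
  have e0 : φ 0 = f x := by simp [hφdef]
  rw [e1, e0] at h01
  linarith

lemma key {n : ℕ} (f : EuclideanSpace ℝ (Fin n) → ℝ) (L : ℝ) (hL : 0 < L)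
    (g : EuclideanSpace ℝ (Fin n) → EuclideanSpace ℝ (Fin n))
    (hgrad : ∀ x, HasGradientAt f (g x) x)
    (hlip : LipschitzWith (Real.toNNReal L) g)
    (y₁ y₂ : EuclideanSpace ℝ (Fin n)) (a b : ℝ) (ha : 0 ≤ a) (hb : 0 ≤ b)
    (hab : a + b = 1) (x : EuclideanSpace ℝ (Fin n)) :
    (inner ℝ x (a • y₁ + b • y₂) : ℝ) - f x + 1 / (2 * L) * (a * b * ‖y₁ - y₂‖ ^ 2) ≤
      a * ((inner ℝ (x + (b / L) • (y₁ - y₂)) y₁ : ℝ) - f (x + (b / L) • (y₁ - y₂)))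
        + b * ((inner ℝ (x - (a / L) • (y₁ - y₂)) y₂ : ℝ) - f (x - (a / L) • (y₁ - y₂))) := by
  set v := y₁ - y₂ with hv
  set x₁ := x + (b / L) • v with hx₁
  set x₂ := x - (a / L) • v with hx₂
  have e1 : (inner ℝ x₁ y₁ : ℝ) = inner ℝ x y₁ + (b / L) * inner ℝ v y₁ := by
    rw [hx₁, inner_add_left, real_inner_smul_left]
  have e2 : (inner ℝ x₂ y₂ : ℝ) = inner ℝ x y₂ - (a / L) * inner ℝ v y₂ := by
    rw [hx₂, inner_sub_left, real_inner_smul_left]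
  have e3 : (inner ℝ v y₁ : ℝ) = inner ℝ v y₂ + ‖v‖ ^ 2 := by
    have : (inner ℝ v y₁ : ℝ) - inner ℝ v y₂ = inner ℝ v v := by rw [← inner_sub_right]
    rw [real_inner_self_eq_norm_sq] at this
    linarith
  have e4 : (inner ℝ x (a • y₁ + b • y₂) : ℝ) = a * inner ℝ x y₁ + b * inner ℝ x y₂ := by
    rw [inner_add_right, real_inner_smul_right, real_inner_smul_right]
  have d1 : f x₁ ≤ f x + (b / L) * inner ℝ (g x) v + L / 2 * ((b / L) * ‖v‖) ^ 2 := by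
    have h := descent f L hL g hgrad hlip x x₁
    have harg : x₁ - x = (b / L) • v := by rw [hx₁]; abel
    rw [harg, real_inner_smul_right, norm_smul, Real.norm_eq_abs,
      abs_of_nonneg (div_nonneg hb hL.le)] at h
    exact h
  have d2 : f x₂ ≤ f x - (a / L) * inner ℝ (g x) v + L / 2 * ((a / L) * ‖v‖) ^ 2 := by
    have h := descent f L hL g hgrad hlip x x₂
    have harg : x₂ - x = -((a / L) • v) := by rw [hx₂]; abel
    rw [harg, inner_neg_right, real_inner_smul_right, norm_neg, norm_smul, Real.norm_eq_abs,
      abs_of_nonneg (div_nonneg ha hL.le)] at h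
    linarith
  have i1 : a * ((inner ℝ x₁ y₁ : ℝ) - f x₁) ≥
      a * ((inner ℝ x y₁ : ℝ) + (b / L) * inner ℝ v y₁
        - (f x + (b / L) * inner ℝ (g x) v + L / 2 * ((b / L) * ‖v‖) ^ 2)) := by
    apply mul_le_mul_of_nonneg_left _ ha
    rw [e1]; linarith
  have i2 : b * ((inner ℝ x₂ y₂ : ℝ) - f x₂) ≥
      b * ((inner ℝ x y₂ : ℝ) - (a / L) * inner ℝ v y₂
        - (f x - (a / L) * inner ℝ (g x) v + L / 2 * ((a / L) * ‖v‖) ^ 2)) := by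
    apply mul_le_mul_of_nonneg_left _ hb
    rw [e2]; linarith
  rw [e4]
  have hb1 : b = 1 - a := by linarith
  have hL' : L ≠ 0 := hL.ne'
  have hid : a * ((inner ℝ x y₁ : ℝ) + (b / L) * inner ℝ v y₁
        - (f x + (b / L) * inner ℝ (g x) v + L / 2 * ((b / L) * ‖v‖) ^ 2))
      + b * ((inner ℝ x y₂ : ℝ) - (a / L) * inner ℝ v y₂
        - (f x - (a / L) * inner ℝ (g x) v + L / 2 * ((a / L) * ‖v‖) ^ 2))
      = a * (inner ℝ x y₁ : ℝ) + b * (inner ℝ x y₂ : ℝ) - f x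
        + 1 / (2 * L) * (a * b * ‖v‖ ^ 2) := by
    rw [e3, hb1]
    field_simp
    ring
  linarith [i1, i2, hid]

lemma ereal_add_coe_le_coe (x : EReal) (c d : ℝ) :
    x + (c : EReal) ≤ (d : EReal) ↔ x ≤ ((d - c : ℝ) : EReal) := by
  induction x using EReal.rec with
  | bot => simp
  | coe r =>
      rw [← EReal.coe_add, EReal.coe_le_coe_iff, EReal.coe_le_coe_iff]
      constructor <;> intro h <;> linarith
  | top =>
      simp only [EReal.top_add_coe, top_le_iff]
      exact iff_of_false (EReal.coe_ne_top d) (EReal.coe_ne_top (d - c))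

lemma ereal_coe_mul_ne_bot (a : ℝ) (ha : 0 < a) (x : EReal) (hx : x ≠ ⊥) :
    (a : EReal) * x ≠ ⊥ := by
  induction x using EReal.rec with
  | bot => exact absurd rfl hx
  | coe r => rw [← EReal.coe_mul]; exact EReal.coe_ne_bot _
  | top => rw [EReal.coe_mul_top_of_pos ha]; simp

theorem lcg_conj_strongly_convex (n : ℕ) (f : EuclideanSpace ℝ (Fin n) → ℝ)
    (L : ℝ) (hL : 0 < L)
    (hconv : ConvexOn ℝ Set.univ f)
    (g : EuclideanSpace ℝ (Fin n) → EuclideanSpace ℝ (Fin n))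
    (hgrad : ∀ x, HasGradientAt f (g x) x)
    (hlip : LipschitzWith (Real.toNNReal L) g) :
    ∀ (y₁ y₂ : EuclideanSpace ℝ (Fin n)) (a b : ℝ), 0 ≤ a → 0 ≤ b → a + b = 1 →
      (⨆ x : EuclideanSpace ℝ (Fin n), ((inner ℝ x (a • y₁ + b • y₂) : ℝ) : EReal) - (f x : ℝ))
          + ((1 / (2 * L) * (a * b * ‖y₁ - y₂‖ ^ 2) : ℝ) : EReal) ≤
        (a : EReal) * (⨆ x : EuclideanSpace ℝ (Fin n), ((inner ℝ x y₁ : ℝ) : EReal) - (f x : ℝ))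
          + (b : EReal) * (⨆ x : EuclideanSpace ℝ (Fin n), ((inner ℝ x y₂ : ℝ) : EReal) - (f x : ℝ)) := by
  intro y₁ y₂ a b ha hb hab
  have hSrew : ∀ y : EuclideanSpace ℝ (Fin n),
      (⨆ x : EuclideanSpace ℝ (Fin n), ((inner ℝ x y : ℝ) : EReal) - (f x : ℝ))
        = ⨆ x : EuclideanSpace ℝ (Fin n), (((inner ℝ x y - f x : ℝ)) : EReal) := by
    intro y; exact iSup_congr fun x => (EReal.coe_sub _ _).symm
  have hSlb : ∀ y : EuclideanSpace ℝ (Fin n), ((-(f 0) : ℝ) : EReal) ≤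
      ⨆ x : EuclideanSpace ℝ (Fin n), ((inner ℝ x y : ℝ) : EReal) - (f x : ℝ) := by
    intro y
    rw [hSrew]
    have := le_iSup (fun x : EuclideanSpace ℝ (Fin n) => (((inner ℝ x y - f x : ℝ)) : EReal)) 0
    simpa using this
  rcases eq_or_lt_of_le ha with ha0 | ha'
  · -- a = 0
    have hb1 : b = 1 := by linarith
    subst hb1
    rw [← ha0]
    norm_num
  rcases eq_or_lt_of_le hb with hb0 | hb'
  · -- b = 0
    have ha1 : a = 1 := by linarith
    subst ha1
    rw [← hb0]
    norm_num
  have hbot₁ : (⨆ x : EuclideanSpace ℝ (Fin n), ((inner ℝ x y₁ : ℝ) : EReal) - (f x : ℝ)) ≠ ⊥ :=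
    ne_of_gt (lt_of_lt_of_le (EReal.bot_lt_coe _) (hSlb y₁))
  have hbot₂ : (⨆ x : EuclideanSpace ℝ (Fin n), ((inner ℝ x y₂ : ℝ) : EReal) - (f x : ℝ)) ≠ ⊥ :=
    ne_of_gt (lt_of_lt_of_le (EReal.bot_lt_coe _) (hSlb y₂))
  by_cases hT1 : (⨆ x : EuclideanSpace ℝ (Fin n), ((inner ℝ x y₁ : ℝ) : EReal) - (f x : ℝ)) = ⊤
  · rw [hT1, EReal.coe_mul_top_of_pos ha',
      EReal.top_add_of_ne_bot (ereal_coe_mul_ne_bot b hb' _ hbot₂)]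
    exact le_top
  by_cases hT2 : (⨆ x : EuclideanSpace ℝ (Fin n), ((inner ℝ x y₂ : ℝ) : EReal) - (f x : ℝ)) = ⊤
  · rw [hT2, EReal.coe_mul_top_of_pos hb',
      EReal.add_top_of_ne_bot (ereal_coe_mul_ne_bot a ha' _ hbot₁)]
    exact le_top
  set r₁ := (⨆ x : EuclideanSpace ℝ (Fin n), ((inner ℝ x y₁ : ℝ) : EReal) - (f x : ℝ)).toReal with hr₁def
  set r₂ := (⨆ x : EuclideanSpace ℝ (Fin n), ((inner ℝ x y₂ : ℝ) : EReal) - (f x : ℝ)).toReal with hr₂def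
  have hr₁ : ((r₁ : ℝ) : EReal)
      = ⨆ x : EuclideanSpace ℝ (Fin n), ((inner ℝ x y₁ : ℝ) : EReal) - (f x : ℝ) :=
    EReal.coe_toReal hT1 hbot₁
  have hr₂ : ((r₂ : ℝ) : EReal)
      = ⨆ x : EuclideanSpace ℝ (Fin n), ((inner ℝ x y₂ : ℝ) : EReal) - (f x : ℝ) :=
    EReal.coe_toReal hT2 hbot₂
  have hub₁ : ∀ u : EuclideanSpace ℝ (Fin n), (inner ℝ u y₁ : ℝ) - f u ≤ r₁ := by
    intro u
    have h := le_iSup (fun x : EuclideanSpace ℝ (Fin n) =>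
      ((inner ℝ x y₁ : ℝ) : EReal) - (f x : ℝ)) u
    rw [← hr₁] at h
    exact_mod_cast h
  have hub₂ : ∀ u : EuclideanSpace ℝ (Fin n), (inner ℝ u y₂ : ℝ) - f u ≤ r₂ := by
    intro u
    have h := le_iSup (fun x : EuclideanSpace ℝ (Fin n) =>
      ((inner ℝ x y₂ : ℝ) : EReal) - (f x : ℝ)) u
    rw [← hr₂] at h
    exact_mod_cast h
  rw [← hr₁, ← hr₂, ← EReal.coe_mul, ← EReal.coe_mul, ← EReal.coe_add, hSrew,
    ereal_add_coe_le_coe]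
  apply iSup_le
  intro x
  rw [EReal.coe_le_coe_iff]
  have hk := key f L hL g hgrad hlip y₁ y₂ a b ha hb hab x
  have h1 := mul_le_mul_of_nonneg_left (hub₁ (x + (b / L) • (y₁ - y₂))) ha
  have h2 := mul_le_mul_of_nonneg_left (hub₂ (x - (a / L) • (y₁ - y₂))) hb
  linarith
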